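/- arXiv:2207.10590 — 3 statements merged into one kernel-verified Lean document; each statement's English description precedes it below -/
import Mathlib

section
/- Let X be a standard Borel space and R an equivalence relation on X. For sub-probability measures μ, ν on X of equal total mass, if μ ΘR ν (i.e., there exists a coupling ω of μ and ν and a measurable set S ⊆ R with ω(S) = ω(X × X)), then μ ΓR ν (i.e., μ and ν agree on all measurable R-closed sets). -/
open MeasureTheory

/-- A set `A` is `r`-closed when it is closed under the relation `r`. -/
def RClosed {X : Type*} (r : X → X → Prop) (A : Set X) : Prop :=
  ∀ ⦃x⦄, x ∈ A → ∀ ⦃y⦄, r x y → y ∈ A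

/-- The probabilistic relation lifting `Γ`. -/
def GammaRel {X : Type*} [MeasurableSpace X] (r : X → X → Prop) (μ ν : Measure X) : Prop :=
  ∀ A : Set X, MeasurableSet A → RClosed r A → μ A = ν A

/-- On standard Borel spaces, the coupling lifting `Θ` is included in the lifting `Γ`:
if sub-probability measures `μ, ν` of equal mass admit a coupling concentrated on a
measurable subset of the relation, then they agree on all `r`-closed measurable sets. -/
theorem thetaRel_subset_gammaRel {X : Type*} [MeasurableSpace X] [StandardBorelSpace X]
    (r : X → X → Prop) (hr : Equivalence r)
    (μ ν : Measure X) [IsFiniteMeasure μ] [IsFiniteMeasure ν]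
    (hμ : μ Set.univ ≤ 1) (hν : ν Set.univ ≤ 1) (hmass : μ Set.univ = ν Set.univ)
    (h : ∃ ω : Measure (X × X), ω.fst = μ ∧ ω.snd = ν ∧
      ∃ S : Set (X × X), MeasurableSet S ∧ (∀ p ∈ S, r p.1 p.2) ∧ ω S = ω Set.univ) :
    GammaRel r μ ν := by
  obtain ⟨ω, hfst, hsnd, S, hSmeas, hSr, hSfull⟩ := h
  have hωfin : IsFiniteMeasure ω := by
    constructor
    have : ω Set.univ = μ Set.univ := by
      rw [← hfst, Measure.fst_apply MeasurableSet.univ]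
      simp
    rw [this]
    exact measure_lt_top μ _
  have hScompl : ω Sᶜ = 0 := by
    rw [measure_compl hSmeas (measure_ne_top ω S), hSfull, tsub_self]
  intro A hA hAcl
  have key : ∀ T : Set (X × X), ω T = ω (T ∩ S) := by
    intro T
    have h1 : ω (T ∩ S) + ω (T \ S) = ω T := measure_inter_add_diff T hSmeas
    have h2 : ω (T \ S) = 0 :=
      le_antisymm ((measure_mono (Set.diff_subset_compl T S)).trans hScompl.le) (zero_le)
    rw [h2, add_zero] at h1
    exact h1.symm
  have hrest : (A ×ˢ (Set.univ : Set X)) ∩ S = ((Set.univ : Set X) ×ˢ A) ∩ S := by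
    ext ⟨x, y⟩
    simp only [Set.mem_inter_iff, Set.mem_prod, Set.mem_univ, true_and, and_true]
    exact ⟨fun ⟨hx, hS⟩ => ⟨hAcl hx (hSr _ hS), hS⟩,
      fun ⟨hy, hS⟩ => ⟨hAcl hy (hr.symm (hSr _ hS)), hS⟩⟩
  calc μ A = ω (A ×ˢ Set.univ) := by
        rw [← hfst, Measure.fst_apply hA, ← Set.prod_univ]
    _ = ω ((A ×ˢ Set.univ) ∩ S) := key _
    _ = ω ((Set.univ ×ˢ A) ∩ S) := by rw [hrest]
    _ = ω (Set.univ ×ˢ A) := (key _).symm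
    _ = ν A := by rw [← hsnd, Measure.snd_apply hA, ← Set.univ_prod]
end

section
/- Let X be a Polish space equipped with its Borel σ-algebra and let F be a countable set of bounded measurable functions from X to ℝ that is closed under pointwise multiplication, separates points of X, and such that for every x ∈ X there exists f ∈ F with f(x) > 0. Then for all probability measures μ, ν on X: if ∫ f dμ = ∫ f dν for every f ∈ F, then μ = ν. -/
open MeasureTheory Set

/-- A countable, multiplicatively closed, point-separating family of bounded measurable
functions with pointwise positivity is separating for probability measures on a Polish
space. -/
theorem separating_family_of_countable {X : Type*}
    [TopologicalSpace X] [PolishSpace X] [MeasurableSpace X] [BorelSpace X]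
    (F : Set (X → ℝ)) (hF : F.Countable)
    (hmeas : ∀ f ∈ F, Measurable f)
    (hbdd : ∀ f ∈ F, ∃ C : ℝ, ∀ x, |f x| ≤ C)
    (hmul : ∀ f ∈ F, ∀ g ∈ F, (fun x => f x * g x) ∈ F)
    (hsep : ∀ x y : X, x ≠ y → ∃ f ∈ F, f x ≠ f y)
    (hpos : ∀ x : X, ∃ f ∈ F, 0 < f x) :
    ∀ μ ν : Measure X, IsProbabilityMeasure μ → IsProbabilityMeasure ν →
      (∀ f ∈ F, ∫ x, f x ∂μ = ∫ x, f x ∂ν) → μ = ν := by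
  intro μ ν hμ hν hint
  rcases isEmpty_or_nonempty X with hX | hX
  · exfalso
    have h1 : μ Set.univ = 1 := measure_univ
    rw [Set.univ_eq_empty_iff.mpr hX, measure_empty] at h1
    exact zero_ne_one h1
  have hFne : F.Nonempty := by
    obtain ⟨x⟩ := hX
    obtain ⟨f, hf, -⟩ := hpos x
    exact ⟨f, hf⟩
  obtain ⟨e, he⟩ := hF.exists_eq_range hFne
  have heF : ∀ n, e n ∈ F := fun n => he ▸ ⟨n, rfl⟩
  choose C hC using fun n => hbdd (e n) (heF n)
  have hmemIcc : ∀ n x, e n x ∈ Icc (-(C n)) (C n) := fun n x => by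
    have h := abs_le.mp (hC n x); exact ⟨h.1, h.2⟩
  let K := ∀ n : ℕ, (Icc (-(C n)) (C n) : Set ℝ)
  haveI : ∀ n : ℕ, PolishSpace (Icc (-(C n)) (C n) : Set ℝ) := fun n =>
    isClosed_Icc.polishSpace
  haveI : ∀ n : ℕ, CompactSpace (Icc (-(C n)) (C n) : Set ℝ) := fun n =>
    isCompact_iff_compactSpace.mp isCompact_Icc
  let Φ : X → K := fun x n => ⟨e n x, hmemIcc n x⟩
  have hΦmeas : Measurable Φ :=
    measurable_pi_lambda _ fun n => (hmeas _ (heF n)).subtype_mk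
  have hΦinj : Function.Injective Φ := by
    intro x y hxy
    by_contra hne
    obtain ⟨f, hfF, hf⟩ := hsep x y hne
    rw [he] at hfF
    obtain ⟨n, rfl⟩ := hfF
    exact hf (congrArg Subtype.val (congrFun hxy n))
  let coord : ℕ → C(K, ℝ) := fun n =>
    ⟨fun k => (k n : ℝ), continuous_subtype_val.comp (continuous_apply n)⟩
  have intble : ∀ (m : Measure X) [IsFiniteMeasure m] (p : C(K, ℝ)),
      Integrable (fun x => p (Φ x)) m := by
    intro m hm p
    refine (integrable_const ‖p‖).mono'
      ((p.continuous.measurable.comp hΦmeas).aestronglyMeasurable)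
      (ae_of_all _ fun x => p.norm_coe_le_norm (Φ x))
  have hmono : ∀ p ∈ Submonoid.closure (Set.range coord),
      ((fun x => p (Φ x)) = fun _ => (1:ℝ)) ∨ (fun x => p (Φ x)) ∈ F := by
    intro p hp
    induction hp using Submonoid.closure_induction with
    | mem q hq =>
      obtain ⟨n, rfl⟩ := hq
      exact Or.inr (heF n)
    | one => exact Or.inl rfl
    | mul q r hq hr ihq ihr =>
      rcases ihq with h1 | h1 <;> rcases ihr with h2 | h2
      · left; funext x
        show q (Φ x) * r (Φ x) = 1
        rw [congrFun h1 x, congrFun h2 x, one_mul]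
      · right
        have heq2 : (fun x => (q * r) (Φ x)) = fun x => r (Φ x) := by
          funext x
          show q (Φ x) * r (Φ x) = r (Φ x)
          rw [congrFun h1 x, one_mul]
        rw [heq2]; exact h2
      · right
        have heq2 : (fun x => (q * r) (Φ x)) = fun x => q (Φ x) := by
          funext x
          show q (Φ x) * r (Φ x) = q (Φ x)
          rw [congrFun h2 x, mul_one]
        rw [heq2]; exact h1
      · right
        exact hmul _ h1 _ h2
  have hspan : ∀ p : C(K,ℝ), p ∈ Algebra.adjoin ℝ (Set.range coord) →
      ∫ x, p (Φ x) ∂μ = ∫ x, p (Φ x) ∂ν := by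
    intro p hp
    have hp' : p ∈ Submodule.span ℝ
        ((Submonoid.closure (Set.range coord) : Submonoid C(K,ℝ)) : Set C(K,ℝ)) := by
      have := Algebra.adjoin_eq_span (R := ℝ) (s := Set.range coord)
      rw [← this]
      exact hp
    clear hp
    induction hp' using Submodule.span_induction with
    | mem q hq =>
      rcases hmono q hq with h | h
      · rw [show (fun x => q (Φ x)) = fun _ => (1:ℝ) from h]
        simp
      · exact hint _ h
    | zero => simp
    | add q r hq hr ihq ihr =>
      have : ∀ x, (q + r) (Φ x) = q (Φ x) + r (Φ x) := fun x => rfl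
      simp only [this]
      rw [integral_add (intble μ q) (intble μ r), integral_add (intble ν q) (intble ν r),
        ihq, ihr]
    | smul c q hq ihq =>
      have : ∀ x, (c • q) (Φ x) = c • (q (Φ x)) := fun x => rfl
      simp only [this]
      rw [integral_smul, integral_smul, ihq]
  have hA : (Algebra.adjoin ℝ (Set.range coord)).topologicalClosure = ⊤ := by
    apply ContinuousMap.subalgebra_topologicalClosure_eq_top_of_separatesPoints
    intro k k' hkk'
    obtain ⟨n, hn⟩ : ∃ n, k n ≠ k' n := by
      by_contra h
      push_neg at h
      exact hkk' (funext h)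
    refine ⟨_, ⟨coord n, Algebra.subset_adjoin ⟨n, rfl⟩, rfl⟩, ?_⟩
    exact fun hc => hn (Subtype.ext hc)
  have hall : ∀ g : C(K, ℝ), ∫ x, g (Φ x) ∂μ = ∫ x, g (Φ x) ∂ν := by
    intro g
    have hg : g ∈ closure ((Algebra.adjoin ℝ (Set.range coord)) : Set C(K,ℝ)) := by
      have : g ∈ (Algebra.adjoin ℝ (Set.range coord)).topologicalClosure := by
        rw [hA]; trivial
      exact this
    obtain ⟨u, hu_mem, hu_tend⟩ := mem_closure_iff_seq_limit.mp hg
    have hbound : ∀ᶠ n in Filter.atTop, ∀ᵐ x ∂(μ + ν), ‖u n (Φ x)‖ ≤ ‖g‖ + 1 := by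
      obtain ⟨N, hN⟩ := Metric.tendsto_atTop.mp hu_tend 1 one_pos
      refine Filter.eventually_atTop.2 ⟨N, fun n hn => ae_of_all _ fun x => ?_⟩
      calc ‖u n (Φ x)‖ ≤ ‖u n‖ := (u n).norm_coe_le_norm (Φ x)
        _ = ‖g + (u n - g)‖ := by ring_nf
        _ ≤ ‖g‖ + ‖u n - g‖ := norm_add_le _ _
        _ ≤ ‖g‖ + 1 := by
            have := hN n hn
            rw [dist_eq_norm] at this
            linarith
    have tendμ : Filter.Tendsto (fun n => ∫ x, u n (Φ x) ∂μ) Filter.atTop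
        (nhds (∫ x, g (Φ x) ∂μ)) := by
      refine tendsto_integral_filter_of_dominated_convergence (fun _ => ‖g‖ + 1)
        (Filter.Eventually.of_forall fun n =>
          ((u n).continuous.measurable.comp hΦmeas).aestronglyMeasurable)
        ?_ (integrable_const _)
        (ae_of_all _ fun x =>
          ((ContinuousEvalConst.continuous_eval_const (Φ x)).tendsto g).comp hu_tend)
      filter_upwards [hbound] with n hn
      exact (ae_add_measure_iff.mp hn).1
    have tendν : Filter.Tendsto (fun n => ∫ x, u n (Φ x) ∂ν) Filter.atTop
        (nhds (∫ x, g (Φ x) ∂ν)) := by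
      refine tendsto_integral_filter_of_dominated_convergence (fun _ => ‖g‖ + 1)
        (Filter.Eventually.of_forall fun n =>
          ((u n).continuous.measurable.comp hΦmeas).aestronglyMeasurable)
        ?_ (integrable_const _)
        (ae_of_all _ fun x =>
          ((ContinuousEvalConst.continuous_eval_const (Φ x)).tendsto g).comp hu_tend)
      filter_upwards [hbound] with n hn
      exact (ae_add_measure_iff.mp hn).2
    have heq : ∀ n, ∫ x, u n (Φ x) ∂μ = ∫ x, u n (Φ x) ∂ν := fun n =>
      hspan (u n) (hu_mem n)
    simp only [heq] at tendμ
    exact tendsto_nhds_unique tendμ tendν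
  haveI hPμ : IsProbabilityMeasure (μ.map Φ) :=
    Measure.isProbabilityMeasure_map hΦmeas.aemeasurable
  haveI hPν : IsProbabilityMeasure (ν.map Φ) :=
    Measure.isProbabilityMeasure_map hΦmeas.aemeasurable
  have hmapeq : μ.map Φ = ν.map Φ := by
    apply ext_of_forall_lintegral_eq_of_IsFiniteMeasure
    intro f
    have hcont : Continuous fun k : K => (f k : ℝ) :=
      NNReal.continuous_coe.comp f.continuous
    have h1 : Integrable (fun k => (f k : ℝ)) (μ.map Φ) :=
      f.integrable_of_nnreal _
    have h2 : Integrable (fun k => (f k : ℝ)) (ν.map Φ) :=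
      f.integrable_of_nnreal _
    rw [lintegral_coe_eq_integral _ h1, lintegral_coe_eq_integral _ h2]
    congr 1
    rw [integral_map hΦmeas.aemeasurable hcont.aestronglyMeasurable,
      integral_map hΦmeas.aemeasurable hcont.aestronglyMeasurable]
    exact hall ⟨fun k => (f k : ℝ), hcont⟩
  have hemb : MeasurableEmbedding Φ := hΦmeas.measurableEmbedding hΦinj
  ext s hs
  calc μ s = μ.map Φ (Φ '' s) := by
        rw [hemb.map_apply, Set.preimage_image_eq s hΦinj]
    _ = ν.map Φ (Φ '' s) := by rw [hmapeq]
    _ = ν s := by rw [hemb.map_apply, Set.preimage_image_eq s hΦinj]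
end

section
/- Let X be a Polish space. A sequence (μₙ) of sub-probability measures on X converges weakly to a sub-probability measure μ if and only if the sequence of associated probability measures ((μₙ)⊥) on X ⊔ {⊥} (obtained by assigning the missing mass 1 − μₙ(X) to the added point ⊥) converges weakly to μ⊥ on X ⊔ {⊥}. -/
open MeasureTheory Filter Topology

/-- Weak convergence of a sequence of measures, tested against bounded continuous
real-valued functions. -/
def WeakTendsto {α : Type*} [TopologicalSpace α] [MeasurableSpace α]
    (μ : ℕ → Measure α) (ν : Measure α) : Prop :=
  ∀ f : BoundedContinuousFunction α ℝ,
    Tendsto (fun n => ∫ x, f x ∂(μ n)) atTop (𝓝 (∫ x, f x ∂ν))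

/-- The completion of a sub-probability measure on `X` to a probability measure on
`X ⊔ {⊥}`, putting the missing mass on the added point `⊥`. -/
noncomputable def botCompletion {X : Type*} [MeasurableSpace X] (η : Measure X) :
    Measure (X ⊕ Unit) :=
  η.map Sum.inl + (1 - η Set.univ) • Measure.dirac (Sum.inr ())

lemma sum_opensMeasurableSpace {X : Type*} [TopologicalSpace X] [MeasurableSpace X]
    [OpensMeasurableSpace X] : OpensMeasurableSpace (X ⊕ Unit) := by
  constructor
  refine MeasurableSpace.generateFrom_le fun s hs => ?_
  rw [measurableSet_sum_iff]
  exact ⟨(hs.preimage continuous_inl).measurableSet, (hs.preimage continuous_inr).measurableSet⟩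

lemma sum_measurableSingletonClass {X : Type*} [MeasurableSpace X]
    [MeasurableSingletonClass X] : MeasurableSingletonClass (X ⊕ Unit) := by
  refine ⟨fun a => measurableSet_sum_iff.2 ?_⟩
  cases a with
  | inl x =>
    refine ⟨?_, ?_⟩
    · have : Sum.inl ⁻¹' ({Sum.inl x} : Set (X ⊕ Unit)) = {x} := by ext; simp
      rw [this]; exact MeasurableSet.singleton x
    · have : Sum.inr ⁻¹' ({Sum.inl x} : Set (X ⊕ Unit)) = ∅ := by ext; simp
      rw [this]; exact MeasurableSet.empty
  | inr u =>
    refine ⟨?_, ?_⟩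
    · have : Sum.inl ⁻¹' ({Sum.inr u} : Set (X ⊕ Unit)) = ∅ := by ext; simp
      rw [this]; exact MeasurableSet.empty
    · have : Sum.inr ⁻¹' ({Sum.inr u} : Set (X ⊕ Unit)) = {u} := by ext; simp
      rw [this]; exact MeasurableSet.singleton u

lemma integral_botCompletion {X : Type*} [TopologicalSpace X] [MeasurableSpace X] [BorelSpace X]
    [MeasurableSingletonClass X]
    (η : Measure X) [IsFiniteMeasure η]
    (g : BoundedContinuousFunction (X ⊕ Unit) ℝ) :
    ∫ x, g x ∂(botCompletion η)
      = (∫ x, g (Sum.inl x) ∂η) + (1 - η Set.univ).toReal * g (Sum.inr ()) := by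
  haveI := sum_opensMeasurableSpace (X := X)
  haveI := sum_measurableSingletonClass (X := X)
  have hfin : (1 - η Set.univ) ≠ ⊤ :=
    (lt_of_le_of_lt tsub_le_self ENNReal.one_lt_top).ne
  haveI : IsFiniteMeasure (η.map Sum.inl) := Measure.isFiniteMeasure_map η (Sum.inl : X → X ⊕ Unit)
  haveI : IsFiniteMeasure ((1 - η Set.univ) • Measure.dirac (Sum.inr () : X ⊕ Unit)) := by
    constructor
    simp [Measure.smul_apply, lt_top_iff_ne_top, ENNReal.mul_ne_top hfin]
  rw [botCompletion, integral_add_measure (g.integrable _) (g.integrable _),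
    integral_map measurable_inl.aemeasurable g.continuous.aestronglyMeasurable,
    integral_smul_measure, integral_dirac, smul_eq_mul]

lemma toReal_one_sub {a : ENNReal} (ha : a ≤ 1) : (1 - a).toReal = 1 - a.toReal := by
  rw [ENNReal.toReal_sub_of_le ha ENNReal.one_ne_top, ENNReal.toReal_one]

/-- A sequence of sub-probability measures on a Polish space `X` converges weakly iff
the associated probability measures on `X ⊔ {⊥}` converge weakly. -/
theorem weakTendsto_iff_botCompletion {X : Type*}
    [TopologicalSpace X] [PolishSpace X] [MeasurableSpace X] [BorelSpace X]
    (μ : ℕ → Measure X) (ν : Measure X)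
    [∀ n, IsFiniteMeasure (μ n)] [IsFiniteMeasure ν]
    (hμ : ∀ n, μ n Set.univ ≤ 1) (hν : ν Set.univ ≤ 1) :
    WeakTendsto μ ν ↔
      WeakTendsto (fun n => botCompletion (μ n)) (botCompletion ν) := by
  constructor
  · intro h g
    simp only [integral_botCompletion]
    -- mass convergence from testing against constant 1
    have hmass : Tendsto (fun n => (μ n Set.univ).toReal) atTop (𝓝 (ν Set.univ).toReal) := by
      have := h 1
      simpa [integral_const, smul_eq_mul, measureReal_def] using this
    have hmass' : Tendsto (fun n => (1 - μ n Set.univ).toReal * g (Sum.inr ()))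
        atTop (𝓝 ((1 - ν Set.univ).toReal * g (Sum.inr ()))) := by
      simp only [fun n => toReal_one_sub (hμ n), toReal_one_sub hν]
      exact ((tendsto_const_nhds.sub hmass).mul_const _)
    exact (h (g.compContinuous ⟨Sum.inl, continuous_inl⟩)).add hmass'
  · intro h f
    let g : BoundedContinuousFunction (X ⊕ Unit) ℝ :=
      ⟨⟨Sum.elim f (fun _ => 0), f.continuous.sumElim continuous_const⟩, by
        refine ⟨2 * ‖f‖, fun a b => ?_⟩
        have hb : ∀ c : X ⊕ Unit, ‖Sum.elim (f : X → ℝ) (fun _ => 0) c‖ ≤ ‖f‖ := by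
          rintro (x | u)
          · exact f.norm_coe_le_norm x
          · simpa using norm_nonneg f
        calc dist (Sum.elim (f : X → ℝ) (fun _ => 0) a) (Sum.elim (f : X → ℝ) (fun _ => 0) b)
            ≤ ‖Sum.elim (f : X → ℝ) (fun _ => 0) a‖ + ‖Sum.elim (f : X → ℝ) (fun _ => 0) b‖ :=
              dist_le_norm_add_norm _ _
          _ ≤ 2 * ‖f‖ := by linarith [hb a, hb b]⟩
    have := h g
    simp only [integral_botCompletion] at this
    have h1 : ∀ x : X, g (Sum.inl x) = f x := fun _ => rfl
    have h2 : g (Sum.inr ()) = 0 := rfl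
    simp only [h1, h2, mul_zero, add_zero] at this
    exact this
end
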